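/- With F₂ = X₁² + X₂X₃ and the degree-6, 10, 15 invariants F₆, F₁₀, F₁₅ of A₅ ⊂ SL₃(ℂ) as given, the syzygy F₁₅² + 1728F₆⁵ − F₁₀³ − 720F₂F₆³F₁₀ + 80F₂²F₆F₁₀² − 64F₂³(5F₆² − F₂F₁₀)² = 0 holds identically in ℂ[X₁, X₂, X₃]. -/
import Mathlib


open MvPolynomial
set_option maxHeartbeats 4000000 in

theorem A5_syzygy
    (F₂ F₆ F₁₀ F₁₅ : MvPolynomial (Fin 3) ℂ)
    (hF₂ : F₂ = (X 0)^2 + X 1 * X 2)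
    (hF₆ : F₆ = 8 * (X 0)^4 * X 1 * X 2 - 2 * (X 0)^2 * (X 1)^2 * (X 2)^2
      - X 0 * ((X 1)^5 + (X 2)^5) + (X 1)^3 * (X 2)^3)
    (hF₁₀ : F₁₀ = 320 * (X 0)^6 * (X 1)^2 * (X 2)^2 - 160 * (X 0)^4 * (X 1)^3 * (X 2)^3
      + 20 * (X 0)^2 * (X 1)^4 * (X 2)^4 + 6 * (X 1)^5 * (X 2)^5
      - 4 * X 0 * ((X 1)^5 + (X 2)^5) * (32 * (X 0)^4 - 20 * (X 0)^2 * X 1 * X 2 + 5 * (X 1)^2 * (X 2)^2)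
      + (X 1)^10 + (X 2)^10)
    (hF₁₅ : F₁₅ = ((X 1)^5 - (X 2)^5) * (-1024 * (X 0)^10 + 3840 * (X 0)^8 * X 1 * X 2
      - 3840 * (X 0)^6 * (X 1)^2 * (X 2)^2 + 1200 * (X 0)^4 * (X 1)^3 * (X 2)^3
      - 100 * (X 0)^2 * (X 1)^4 * (X 2)^4 + (X 1)^10 + (X 2)^10 + 2 * (X 1)^5 * (X 2)^5
      + X 0 * ((X 1)^5 + (X 2)^5) * (352 * (X 0)^4 - 160 * (X 0)^2 * X 1 * X 2 + 10 * (X 1)^2 * (X 2)^2))) :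
    F₁₅^2 + 1728 * F₆^5 - F₁₀^3 - 720 * F₂ * F₆^3 * F₁₀
      + 80 * F₂^2 * F₆ * F₁₀^2 - 64 * F₂^3 * (5 * F₆^2 - F₂ * F₁₀)^2 = 0 := by subst hF₂ hF₆ hF₁₀ hF₁₅; ring
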